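/- The planar momentum map is equivariant, i.e. J((θ,a)·z) = CoAd_{(θ,a)} J(z) for all z ∈ ℂ^N, θ ∈ ℝ, and a ∈ ℂ, if and only if the total vortex strength Σ_n Γ_n equals zero. -/

import Mathlib

open Complex Finset

/-- `ω₀(a,b) = -Im(a·conj(b))`. -/
noncomputable def om0 (a b : ℂ) : ℝ := -(a * (starRingEnd ℂ) b).im

/-- The planar momentum map `J(z) = (-∑ Γₙ|zₙ|²/2, -∑ Γₙ i zₙ) ∈ ℝ × ℂ`. -/
noncomputable def Jpl {N : ℕ} (Γ : Fin N → ℝ) (z : Fin N → ℂ) : ℝ × ℂ :=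
  (-∑ n, Γ n * ‖z n‖ ^ 2 / 2, -∑ n, (Γ n : ℂ) * (Complex.I * z n))

/-- The diagonal action of `SE(2)` on `ℂᴺ`: `(θ,a)·z = (e^{iθ}zₙ + a)ₙ`. -/
noncomputable def se2Act {N : ℕ} (θ : ℝ) (a : ℂ) (z : Fin N → ℂ) : Fin N → ℂ :=
  fun n => Complex.exp (Complex.I * θ) * z n + a

/-- The coadjoint action of `SE(2)` on `ℝ × ℂ ≅ se(2)*`. -/
noncomputable def coAd (θ : ℝ) (a : ℂ) (μν : ℝ × ℂ) : ℝ × ℂ :=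
  (μν.1 - om0 (Complex.exp (Complex.I * θ) * μν.2) a, Complex.exp (Complex.I * θ) * μν.2)

/-- The planar momentum map is equivariant iff the total vortex strength vanishes. -/
theorem Jpl_equivariant_iff {N : ℕ} (Γ : Fin N → ℝ) :
    (∀ (z : Fin N → ℂ) (θ : ℝ) (a : ℂ), Jpl Γ (se2Act θ a z) = coAd θ a (Jpl Γ z))
      ↔ (∑ n, Γ n) = 0 := by
  constructor
  · intro h
    have h1 := congrArg Prod.fst (h 0 0 1)
    simp [Jpl, se2Act, coAd, om0] at h1
    rw [← Finset.sum_div] at h1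
    have h2 : (∑ n, Γ n) / 2 = 0 := h1
    linarith
  · intro hS z θ a
    set e := Complex.exp (Complex.I * θ) with he
    have hnsE : Complex.normSq e = 1 := by
      have : ‖e‖ = 1 := by simp [he, Complex.norm_exp]
      rw [← Complex.sq_norm, this]; norm_num
    refine Prod.ext ?_ ?_
    · show -∑ n, Γ n * ‖e * z n + a‖ ^ 2 / 2
        = (-∑ n, Γ n * ‖z n‖ ^ 2 / 2) - om0 (e * -∑ n, (Γ n : ℂ) * (Complex.I * z n)) a
      have key : ∀ n, Γ n * ‖e * z n + a‖ ^ 2 / 2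
          = Γ n * ‖z n‖ ^ 2 / 2
            + Γ n * ((e * z n) * (starRingEnd ℂ) a).re + Γ n * Complex.normSq a / 2 := by
        intro n
        rw [Complex.sq_norm, Complex.sq_norm, Complex.normSq_add, Complex.normSq_mul, hnsE,
          one_mul]
        ring
      have hc : ∑ n, Γ n * Complex.normSq a / 2 = 0 := by
        rw [← Finset.sum_div, ← Finset.sum_mul, hS, zero_mul, zero_div]
      have hom : om0 (e * -∑ n, (Γ n : ℂ) * (Complex.I * z n)) a
          = ∑ n, Γ n * ((e * z n) * (starRingEnd ℂ) a).re := by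
        rw [om0, mul_neg, neg_mul, Complex.neg_im, neg_neg, Finset.mul_sum, Finset.sum_mul,
          Complex.im_sum]
        refine Finset.sum_congr rfl fun n _ => ?_
        have : e * ((Γ n : ℂ) * (Complex.I * z n)) * (starRingEnd ℂ) a
            = (Γ n : ℂ) * (Complex.I * ((e * z n) * (starRingEnd ℂ) a)) := by ring
        rw [this]
        simp [Complex.I_mul_im]
      rw [hom]
      simp only [key, Finset.sum_add_distrib, hc]
      ring
    · show -∑ n, (Γ n : ℂ) * (Complex.I * (e * z n + a))
        = e * -∑ n, (Γ n : ℂ) * (Complex.I * z n)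
      have hC : (∑ n, (Γ n : ℂ)) = 0 := by
        rw [← Complex.ofReal_sum, hS, Complex.ofReal_zero]
      rw [mul_neg, Finset.mul_sum, neg_inj]
      have : ∀ n, (Γ n : ℂ) * (Complex.I * (e * z n + a))
          = e * ((Γ n : ℂ) * (Complex.I * z n)) + (Γ n : ℂ) * (Complex.I * a) := by
        intro n; ring
      simp only [this, Finset.sum_add_distrib, ← Finset.sum_mul, hC, zero_mul, add_zero]
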